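/- Let K be an algebraically closed field and let F = {f_1,…,f_m} ⊆ K[x_1,…,x_n] be an inhomogeneous polynomial system such that the homogenized ideal (F^h) is in generic coordinates and Z_+(F^h) ≠ ∅. Then for every integer d ≥ sat((F^h)) one has (F)_{≤d} = W_{F,d}, i.e., every element of the ideal (F) of degree at most d admits a representation Σ g_i·f_i with deg(g_i·f_i) ≤ d for all i. Consequently the last fall degree satisfies d_F = sat((F^h)), and in particular every f ∈ (F) with a degree fall in d_f satisfies d_f ≤ sat((F^h)). -/

import Mathlib

open MvPolynomial

/-! ### Term orders, initial ideals and Gröbner bases -/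

/-- Total degree of an exponent vector. -/
def expDeg {σ : Type*} (a : σ →₀ ℕ) : ℕ := a.sum fun _ e => e

/-- Degree reverse lexicographic strict order on exponent vectors; `sig j i` reads
"`j` is strictly less significant than `i`".  `a` is DRL-smaller than `b` iff its total degree
is smaller, or the degrees agree and at the least significant variable where they differ the
exponent of `a` is larger. -/
def drlLT {σ : Type*} (sig : σ → σ → Prop) (a b : σ →₀ ℕ) : Prop :=
  expDeg a < expDeg b ∨
    (expDeg a = expDeg b ∧ ∃ i, b i < a i ∧ ∀ j, sig j i → a j = b j)

/-- Lexicographic strict order on exponent vectors; `sig i j` reads "`i` is strictly less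
significant than `j`".  `a` is LEX-smaller than `b` iff at the most significant variable where
they differ the exponent of `a` is smaller. -/
def lexLT {σ : Type*} (sig : σ → σ → Prop) (a b : σ →₀ ℕ) : Prop :=
  ∃ i, a i < b i ∧ ∀ j, sig i j → a j = b j

/-- Significance relation on `Fin N` for which the variable significance is strictly
decreasing in the index (`x_0 > x_1 > ⋯`):  `sigDes i j` iff `i` is less significant
than `j`, i.e. `j < i`. -/
def sigDes {N : ℕ} (i j : Fin N) : Prop := j < i

/-- Significance relation on `Fin (N+1)` for a homogenized polynomial ring: the homogenization
variable `x_0` (index `0`) is the least significant variable, and among the remaining variables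
the significance is strictly decreasing in the index. -/
def sigH {N : ℕ} (i j : Fin (N + 1)) : Prop := j ≠ 0 ∧ (i = 0 ∨ j < i)

/-- `a` is the leading monomial (exponent vector) of `f` w.r.t. the strict term order `lt`. -/
def IsLeadMono {σ K : Type*} [CommSemiring K] (lt : (σ →₀ ℕ) → (σ →₀ ℕ) → Prop)
    (f : MvPolynomial σ K) (a : σ →₀ ℕ) : Prop :=
  a ∈ f.support ∧ ∀ b ∈ f.support, b ≠ a → lt b a

/-- The initial ideal of `I` w.r.t. the strict term order `lt`: the ideal generated by the
leading monomials of the nonzero elements of `I`. -/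
noncomputable def initialIdeal {σ K : Type*} [CommSemiring K]
    (lt : (σ →₀ ℕ) → (σ →₀ ℕ) → Prop) (I : Ideal (MvPolynomial σ K)) :
    Ideal (MvPolynomial σ K) :=
  Ideal.span {mf | ∃ f ∈ I, f ≠ 0 ∧ ∃ a, IsLeadMono lt f a ∧ mf = monomial a (1 : K)}

/-- `G` is a Gröbner basis of `I` w.r.t. the strict term order `lt`: `G ⊆ I` and the leading
monomials of the elements of `G` generate the initial ideal of `I`. -/
def IsGroebner {σ K : Type*} [CommSemiring K] (lt : (σ →₀ ℕ) → (σ →₀ ℕ) → Prop)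
    (G : Set (MvPolynomial σ K)) (I : Ideal (MvPolynomial σ K)) : Prop :=
  G ⊆ (I : Set (MvPolynomial σ K)) ∧
    Ideal.span {mf | ∃ g ∈ G, g ≠ 0 ∧ ∃ a, IsLeadMono lt g a ∧ mf = monomial a (1 : K)}
      = initialIdeal lt I

/-! ### Saturation, projective zero loci, generic coordinates, homogenization -/

/-- The saturation `I : (x_0, …, x_n)^∞ = ⋃_k (I : (x_0, …, x_n)^k)` of an ideal of a
polynomial ring with respect to the maximal ideal generated by all the variables. -/
noncomputable def maxSat {K : Type*} [Field K] {σ : Type*}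
    (I : Ideal (MvPolynomial σ K)) : Ideal (MvPolynomial σ K) :=
  ⨆ k : ℕ, Submodule.colon I (((Ideal.span (Set.range (X : σ → MvPolynomial σ K))) ^ k :
    Ideal (MvPolynomial σ K)) : Set (MvPolynomial σ K))

/-- The projective zero locus of `I` over the algebraic closure of `K`. -/
noncomputable def projZerosBar {K : Type*} [Field K] {σ : Type*}
    (I : Ideal (MvPolynomial σ K)) :
    Set (Projectivization (AlgebraicClosure K) (σ → AlgebraicClosure K)) :=
  {x | ∀ f ∈ I, eval x.rep (map (algebraMap K (AlgebraicClosure K)) f) = 0}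

/-- `I` is in generic coordinates (w.r.t. the homogenization variable `v0`): its projective zero
locus over the algebraic closure is finite, and either it is empty or `X v0` is a nonzerodivisor
modulo the saturation `I^sat`. -/
def GenCoords {K : Type*} [Field K] {σ : Type*} (v0 : σ)
    (I : Ideal (MvPolynomial σ K)) : Prop :=
  (projZerosBar I).Finite ∧
    (projZerosBar I = ∅ ∨ ∀ f, X v0 * f ∈ maxSat I → f ∈ maxSat I)

/-- Homogenization of `f` with respect to a new variable `x_0` placed at index `0`; the original
variables are shifted along `Fin.succ`. -/
noncomputable def homogPoly {K : Type*} [CommSemiring K] {q : ℕ}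
    (f : MvPolynomial (Fin q) K) : MvPolynomial (Fin (q + 1)) K :=
  f.support.sum fun a =>
    monomial (Finsupp.single (0 : Fin (q + 1)) (f.totalDegree - expDeg a)
      + a.mapDomain Fin.succ) (f.coeff a)

/-- Dehomogenization: substitute `x_0 ↦ 1` and shift the remaining variables back. -/
noncomputable def dehomAlg {K : Type*} [Field K] (n : ℕ) :
    MvPolynomial (Fin (n + 1)) K →ₐ[K] MvPolynomial (Fin n) K :=
  aeval fun i => Fin.cases (1 : MvPolynomial (Fin n) K) (fun j => X j) i

/-- An ideal of a polynomial ring is homogeneous if it contains all homogeneous components of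
its elements. -/
def IsHomogIdeal {σ K : Type*} [CommSemiring K] (I : Ideal (MvPolynomial σ K)) : Prop :=
  ∀ f ∈ I, ∀ d : ℕ, MvPolynomial.homogeneousComponent d f ∈ I

/-- The highest degree homogeneous component `f^top` of a polynomial. -/
noncomputable def topComp {σ K : Type*} [CommSemiring K] (f : MvPolynomial σ K) :
    MvPolynomial σ K :=
  MvPolynomial.homogeneousComponent f.totalDegree f

/-! ### Keyed iterated polynomial systems -/

open Fin.NatCast in
/-- The univariate keyed iterated polynomial system attached to the bivariate polynomials
`g_1, …, g_n` (with `n = m + 1`, indexed here by `k = 0, …, m`), the plaintext `p` and the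
ciphertext `c`.  The ambient ring is `K[x_1, …, x_m, y]`, where `x_j` has variable index
`j - 1` and `y` has variable index `m`; in the bivariate ring `K[x, y]`, `x` has index `0`
and `y` has index `1`.  Explicitly, `keyedF m g p c 0 = g 1 (p, y) - x 1`,
`keyedF m g p c k = g (k+1) (x k, y) - x (k+1)` for `1 ≤ k ≤ m - 1` and
`keyedF m g p c m = g (m+1) (x m, y) - c`. -/
noncomputable def keyedF {K : Type*} [Field K] (m : ℕ)
    (g : ℕ → MvPolynomial (Fin 2) K) (p c : K) (k : ℕ) :
    MvPolynomial (Fin (m + 1)) K :=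
  aeval ![if k = 0 then C p else X (((k - 1 : ℕ)) : Fin (m + 1)),
          X ((m : ℕ) : Fin (m + 1))] (g k)
    - (if k < m then X ((k : ℕ) : Fin (m + 1)) else C c)

/-- The chain `ĝ_1 = g_1(p, y)`, `ĝ_{k+1} = g_{k+1}(ĝ_k(y), y)` of univariate polynomials
(0-based indexing: `ghat g p k = ĝ_{k+1}`). -/
noncomputable def ghat {K : Type*} [Field K] (g : ℕ → MvPolynomial (Fin 2) K)
    (p : K) : ℕ → Polynomial K
  | 0 => aeval ![Polynomial.C p, Polynomial.X] (g 0)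
  | (k + 1) => aeval ![ghat g p k, Polynomial.X] (g (k + 1))

open Fin.NatCast in
/-- Embed a univariate polynomial into `K[x_1, …, x_m, y]` via the variable `y`. -/
noncomputable def yPoly {K : Type*} [Field K] (m : ℕ) (q : Polynomial K) :
    MvPolynomial (Fin (m + 1)) K :=
  Polynomial.aeval (X ((m : ℕ) : Fin (m + 1))) q

/-- The (monic, up to a unit) greatest common divisor of two univariate polynomials over a
field. -/
noncomputable def polyGCD {K : Type*} [Field K] (f g : Polynomial K) : Polynomial K :=
  @EuclideanDomain.gcd _ _ (Classical.decEq _) f g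

/-- The number of distinct roots of a univariate polynomial in the base field. -/
noncomputable def numRoots {K : Type*} [Field K] (f : Polynomial K) : ℕ :=
  letI := Classical.decEq K
  f.roots.toFinset.card

/-! ### Feistel-2n/n keyed iterated polynomial systems -/

open Fin.NatCast in
/-- The nonlinear ("left branch") polynomials of the keyed iterated polynomial system for
Feistel-`2n/n` (with `n = m + 1`, indexed here by `k = 0, …, m`).  The ambient ring is
`K[x_{L,1}, x_{R,1}, …, x_{L,m}, x_{R,m}, y]` where `x_{L,j}` has variable index `2(j-1)`,
`x_{R,j}` has variable index `2(j-1) + 1` and `y` has variable index `2m`. -/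
noncomputable def fstL {K : Type*} [Field K] (m : ℕ) (g : ℕ → MvPolynomial (Fin 2) K)
    (pL pR cL : K) (k : ℕ) : MvPolynomial (Fin (2 * m + 1)) K :=
  (if k = 0 then C pR else X (((2 * (k - 1) + 1 : ℕ)) : Fin (2 * m + 1)))
  + aeval ![if k = 0 then C pL else X (((2 * (k - 1) : ℕ)) : Fin (2 * m + 1)),
            X (((2 * m : ℕ)) : Fin (2 * m + 1))] (g k)
  - (if k < m then X (((2 * k : ℕ)) : Fin (2 * m + 1)) else C cL)

open Fin.NatCast in
/-- The linear ("right branch") polynomials of the keyed iterated polynomial system for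
Feistel-`2n/n` (same variable conventions as in `fstL`). -/
noncomputable def fstR {K : Type*} [Field K] (m : ℕ) (pL cR : K) (k : ℕ) :
    MvPolynomial (Fin (2 * m + 1)) K :=
  (if k = 0 then C pL else X (((2 * (k - 1) : ℕ)) : Fin (2 * m + 1)))
  - (if k < m then X (((2 * k + 1 : ℕ)) : Fin (2 * m + 1)) else C cR)

open Fin.NatCast in
/-- The downsized Feistel system `H = {f̃_1, …, f̃_n}` (with `n = m + 1`, indexed here by
`k = 0, …, m`), obtained by substituting the linear polynomials into the nonlinear ones.  The
ambient ring is `K[x_{R,2}, …, x_{R,m}, x_{L,m}, y]` where `x_{R,j}` has variable index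
`j - 2`, `x_{L,m}` has variable index `m - 1` and `y` has variable index `m`. -/
noncomputable def hTil {K : Type*} [Field K] (m : ℕ) (g : ℕ → MvPolynomial (Fin 2) K)
    (pL pR cL : K) (k : ℕ) : MvPolynomial (Fin (m + 1)) K :=
  (if k = 0 then C pR else if k = 1 then C pL else X (((k - 2 : ℕ)) : Fin (m + 1)))
  + aeval ![if k = 0 then C pL else X (((k - 1 : ℕ)) : Fin (m + 1)),
            X ((m : ℕ) : Fin (m + 1))] (g k)
  - (if k < m then X ((k : ℕ) : Fin (m + 1)) else C cL)

/-- The chain `ĥ_1 = p_R + g_1(p_L, y)`, `ĥ_2 = p_L + g_2(ĥ_1, y)`,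
`ĥ_i = ĥ_{i-2} + g_i(ĥ_{i-1}, y)` of univariate polynomials (0-based indexing:
`hHat g pL pR k = ĥ_{k+1}`). -/
noncomputable def hHat {K : Type*} [Field K] (g : ℕ → MvPolynomial (Fin 2) K)
    (pL pR : K) : ℕ → Polynomial K
  | 0 => Polynomial.C pR + aeval ![Polynomial.C pL, Polynomial.X] (g 0)
  | 1 => Polynomial.C pL + aeval ![hHat g pL pR 0, Polynomial.X] (g 1)
  | (k + 2) => hHat g pL pR k + aeval ![hHat g pL pR (k + 1), Polynomial.X] (g (k + 2))

/-! ### Two plain/ciphertext systems -/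

open Fin.NatCast in
/-- A univariate keyed iterated polynomial system placed inside the ring
`K[u_1, …, u_m, v_1, …, v_m, y]` (`u_j` has index `j - 1`, `v_j` has index `m + j - 1`, `y` has
index `2m`), with the state variables offset by `off` (so `off = 0` uses the `u`-variables and
`off = m` the `v`-variables). -/
noncomputable def twoF {K : Type*} [Field K] (m : ℕ) (g : ℕ → MvPolynomial (Fin 2) K)
    (p c : K) (off : ℕ) (k : ℕ) : MvPolynomial (Fin (2 * m + 1)) K :=
  aeval ![if k = 0 then C p else X (((off + (k - 1) : ℕ)) : Fin (2 * m + 1)),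
          X (((2 * m : ℕ)) : Fin (2 * m + 1))] (g k)
  - (if k < m then X (((off + k : ℕ)) : Fin (2 * m + 1)) else C c)

/-! ### Macaulay spaces, degree falls, last fall degree, satiety, degree of regularity -/

/-- The row space `W_{F,d}` of the degree-`d` inhomogeneous Macaulay matrix of the system `F`:
all polynomials of the form `∑ gᵢ·fᵢ` with `deg (gᵢ·fᵢ) ≤ d` for every `i`. -/
def Wsp {σ K ι : Type*} [CommSemiring K] [Fintype ι]
    (F : ι → MvPolynomial σ K) (d : ℕ) : Set (MvPolynomial σ K) :=
  {f | ∃ g : ι → MvPolynomial σ K, f = ∑ i, g i * F i ∧ ∀ i, (g i * F i).totalDegree ≤ d}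

/-- `d_f`: the least degree `d` with `f ∈ W_{F,d}`. -/
noncomputable def dfall {σ K ι : Type*} [CommSemiring K] [Fintype ι]
    (F : ι → MvPolynomial σ K) (f : MvPolynomial σ K) : ℕ :=
  sInf {d : ℕ | f ∈ Wsp F d}

/-- The last fall degree `d_F ∈ ℕ ∪ {∞}`: the least `d` such that every `f` in the ideal
generated by `F` lies in `W_{F, max (d, deg f)}` (the value `∞` imposes no condition since
`W_{F,∞} = (F)`). -/
noncomputable def lastFall {σ K ι : Type*} [CommSemiring K] [Fintype ι]
    (F : ι → MvPolynomial σ K) : ℕ∞ :=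
  sInf {d : ℕ∞ | ∀ e : ℕ, d = (e : ℕ∞) →
    ∀ f ∈ Ideal.span (Set.range F), f ∈ Wsp F (max e f.totalDegree)}

/-- The satiety of a homogeneous ideal: the least `s` such that `I` and `I^sat` agree in all
degrees `l ≥ s`. -/
noncomputable def satiety {σ K : Type*} [Field K] (I : Ideal (MvPolynomial σ K)) : ℕ :=
  sInf {s : ℕ | ∀ l, s ≤ l → ∀ f : MvPolynomial σ K, f.IsHomogeneous l →
    (f ∈ I ↔ f ∈ maxSat I)}

/-- The degree of regularity `d_reg(F) ∈ ℕ ∪ {∞}` of a polynomial system: the least `d` such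
that every homogeneous polynomial of degree `d` lies in the ideal generated by the highest
degree components `F^top`. -/
noncomputable def dregSys {σ K : Type*} [CommSemiring K] (F : Set (MvPolynomial σ K)) : ℕ∞ :=
  sInf {e : ℕ∞ | ∃ d : ℕ, e = (d : ℕ∞) ∧ ∀ f : MvPolynomial σ K, f.IsHomogeneous d →
    f ∈ Ideal.span (topComp '' F)}

/-!
Write `f⁽ᵈ⁾ = x₀ ^ (d - deg f) * f^h` for the homogenization of `f` to degree `d ≥ deg f`.
If `f ∈ (F)` has degree `≤ d`, homogenizing a representation `f = ∑ gᵢ fᵢ` shows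
`x₀ ^ k * f⁽ᵈ⁾ ∈ (F^h)` for some `k`. As `x₀` is a nonzerodivisor modulo `(F^h)^sat`, this gives
`f⁽ᵈ⁾ ∈ (F^h)^sat`, and `(F^h)^sat` agrees with `(F^h)` in degree `d ≥ sat((F^h))`. Taking the
degree-`d` part of `f⁽ᵈ⁾ = ∑ pᵢ fᵢ^h` and dehomogenizing yields `f = ∑ gᵢ fᵢ` with
`deg (gᵢ fᵢ) ≤ d`. Conversely, if every `f ∈ (F)` lies in `W_{F, max (e, deg f)}`, then a
homogeneous element of `(F^h)^sat` of degree `l ≥ e` dehomogenizes into `(F)`, and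
rehomogenizing a representation of degree `≤ l` puts it back into `(F^h)`; so `sat((F^h)) ≤ e`.
-/

open Pointwise

lemma Finsupp.degree_cons {M : Type*} [AddCommMonoid M] {n : ℕ} (y : M) (s : Fin n →₀ M) :
    (Finsupp.cons y s).degree = y + s.degree :=
  Finsupp.sum_cons n s y

lemma Finsupp.single_zero_add_mapDomain_succ {M : Type*} [AddCommMonoid M] {n : ℕ} (y : M)
    (s : Fin n →₀ M) :
    Finsupp.single 0 y + s.mapDomain Fin.succ = Finsupp.cons y s := by
  ext i
  refine Fin.cases ?_ (fun j => ?_) i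
  · have h0 : (0 : Fin (n + 1)) ∉ Set.range Fin.succ := by simp
    simp [Finsupp.mapDomain_of_notMem_range _ _ h0]
  · simp [Finsupp.mapDomain_apply (Fin.succ_injective n)]

namespace MvPolynomial

section HomogeneousComponents

attribute [local instance] MvPolynomial.gradedAlgebra

variable {σ R : Type*} [CommSemiring R]

lemma decompose_homogeneousSubmodule_apply (p : MvPolynomial σ R) (n : ℕ) :
    (DirectSum.decompose (homogeneousSubmodule σ R) p n : MvPolynomial σ R) =
      homogeneousComponent n p :=
  decomposition.decompose'_apply p n

lemma homogeneousComponent_mul_of_isHomogeneous {t : MvPolynomial σ R} {e : ℕ}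
    (ht : t.IsHomogeneous e) (p : MvPolynomial σ R) (d : ℕ) :
    homogeneousComponent d (p * t) =
      if e ≤ d then homogeneousComponent (d - e) p * t else 0 := by
  rw [← decompose_homogeneousSubmodule_apply, DirectSum.coe_decompose_mul_of_right_mem _ d ht,
    decompose_homogeneousSubmodule_apply]

lemma homogeneousComponent_add_mul_of_isHomogeneous {t : MvPolynomial σ R} {e : ℕ}
    (ht : t.IsHomogeneous e) (p : MvPolynomial σ R) (d : ℕ) :
    homogeneousComponent (d + e) (p * t) = homogeneousComponent d p * t := by
  rw [homogeneousComponent_mul_of_isHomogeneous ht, if_pos (Nat.le_add_left e d),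
    Nat.add_sub_cancel]

lemma isHomogeneous_of_mem_range_X_pow {k : ℕ} {t : MvPolynomial σ R}
    (ht : t ∈ Set.range X ^ k) : t.IsHomogeneous k := by
  induction k generalizing t with
  | zero =>
    rw [pow_zero, Set.mem_one] at ht
    exact ht ▸ isHomogeneous_one σ R
  | succ k ih =>
    rw [pow_succ] at ht
    obtain ⟨a, ha, b, ⟨i, rfl⟩, rfl⟩ := Set.mem_mul.mp ht
    exact (ih ha).mul (isHomogeneous_X R i)

local notation "𝔪" => Ideal.span (Set.range (X : σ → MvPolynomial σ R))

lemma span_range_X_pow (k : ℕ) : 𝔪 ^ k = Ideal.span (Set.range X ^ k) :=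
  Submodule.span_pow _ k

lemma isHomogeneous_colon_span_X_pow {I : Ideal (MvPolynomial σ R)}
    (hI : I.IsHomogeneous (homogeneousSubmodule σ R)) (k : ℕ) :
    (I.colon (𝔪 ^ k : Ideal _)).IsHomogeneous (homogeneousSubmodule σ R) := by
  intro d r hr
  rw [span_range_X_pow, Ideal.colon_span] at hr ⊢
  rw [Submodule.mem_colon] at hr ⊢
  intro t ht
  rw [decompose_homogeneousSubmodule_apply, smul_eq_mul,
    ← homogeneousComponent_add_mul_of_isHomogeneous (isHomogeneous_of_mem_range_X_pow ht)]
  exact homogeneousComponent_mem_of_mem hI (hr t ht) _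

lemma mem_span_X_pow_of_isHomogeneous {k m : ℕ} {p : MvPolynomial σ R}
    (hp : p.IsHomogeneous m) (hkm : k ≤ m) : p ∈ 𝔪 ^ k := by
  refine Ideal.pow_le_pow_right hkm ?_
  rcases Nat.eq_zero_or_pos m with rfl | hm
  · simp
  have h1 : homogeneousSubmodule σ R 1 ≤ (𝔪).restrictScalars R := by
    rw [homogeneousSubmodule_one_eq_span_X]
    exact Submodule.span_le.mpr fun x hx => Ideal.subset_span hx
  have h2 := pow_le_pow_left' h1 m
  rw [homogeneousSubmodule_one_pow, ← Submodule.restrictScalars_pow hm.ne'] at h2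
  exact h2 ((mem_homogeneousSubmodule m p).mpr hp)

end HomogeneousComponents

section Homogenization

variable {R : Type*} [CommSemiring R] {n : ℕ}

noncomputable def homogenizeExp (d : ℕ) (a : Fin n →₀ ℕ) : Fin (n + 1) →₀ ℕ :=
  Finsupp.cons (d - a.degree) a

lemma degree_homogenizeExp {d : ℕ} {a : Fin n →₀ ℕ} (h : a.degree ≤ d) :
    (homogenizeExp d a).degree = d := by
  rw [homogenizeExp, Finsupp.degree_cons]
  omega

lemma homogenizeExp_add {d e : ℕ} {a b : Fin n →₀ ℕ} (ha : a.degree ≤ d) (hb : b.degree ≤ e) :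
    homogenizeExp (d + e) (a + b) = homogenizeExp d a + homogenizeExp e b := by
  ext i
  refine Fin.cases ?_ (fun j => ?_) i <;>
    simp only [homogenizeExp, Finsupp.add_apply, Finsupp.cons_zero, Finsupp.cons_succ, map_add]
  omega

lemma homogenizeExp_add_left {d k : ℕ} {a : Fin n →₀ ℕ} (h : a.degree ≤ d) :
    homogenizeExp (k + d) a = Finsupp.single 0 k + homogenizeExp d a := by
  ext i
  refine Fin.cases ?_ (fun j => ?_) i
  · simp only [homogenizeExp, Finsupp.add_apply, Finsupp.cons_zero, Finsupp.single_eq_same]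
    omega
  · simp only [homogenizeExp, Finsupp.add_apply, Finsupp.cons_succ,
      Finsupp.single_eq_of_ne (Fin.succ_ne_zero j), zero_add]

/-- Homogenization to a prescribed degree `d ≥ deg f`, i.e. `x₀ ^ (d - deg f) * f^h`;
unlike `f ↦ f^h` it is linear. -/
noncomputable def homogenizeTo (d : ℕ) :
    MvPolynomial (Fin n) R →ₗ[R] MvPolynomial (Fin (n + 1)) R :=
  Finsupp.lsum R (fun a => monomial (homogenizeExp d a)) ∘ₗ
    (AddMonoidAlgebra.coeffLinearEquiv R).toLinearMap

lemma homogenizeTo_monomial (d : ℕ) (a : Fin n →₀ ℕ) (c : R) :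
    homogenizeTo d (monomial a c) = monomial (homogenizeExp d a) c :=
  Finsupp.lsum_single R _ a c

lemma homogenizeTo_apply (d : ℕ) (f : MvPolynomial (Fin n) R) :
    homogenizeTo d f = ∑ a ∈ f.support, monomial (homogenizeExp d a) (coeff a f) := by
  conv_lhs => rw [← support_sum_monomial_coeff f]
  simp only [map_sum, homogenizeTo_monomial]

lemma homogPoly_eq_homogenizeTo (f : MvPolynomial (Fin n) R) :
    homogPoly f = homogenizeTo f.totalDegree f := by
  simp only [homogenizeTo_apply, homogPoly, homogenizeExp, expDeg,
    Finsupp.single_zero_add_mapDomain_succ]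
  rfl

lemma isHomogeneous_homogenizeTo {d : ℕ} {f : MvPolynomial (Fin n) R} (h : f.totalDegree ≤ d) :
    (homogenizeTo d f).IsHomogeneous d := by
  rw [homogenizeTo_apply]
  exact IsHomogeneous.sum _ _ _ fun a ha =>
    isHomogeneous_monomial _ (degree_homogenizeExp ((le_totalDegree ha).trans h))

lemma isHomogeneous_homogPoly (f : MvPolynomial (Fin n) R) :
    (homogPoly f).IsHomogeneous f.totalDegree := by
  rw [homogPoly_eq_homogenizeTo]
  exact isHomogeneous_homogenizeTo le_rfl

lemma homogenizeTo_mul {d e : ℕ} {f g : MvPolynomial (Fin n) R}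
    (hf : f.totalDegree ≤ d) (hg : g.totalDegree ≤ e) :
    homogenizeTo (d + e) (f * g) = homogenizeTo d f * homogenizeTo e g := by
  conv_lhs => rw [← support_sum_monomial_coeff f, ← support_sum_monomial_coeff g]
  simp only [homogenizeTo_apply d, homogenizeTo_apply e, Finset.sum_mul_sum, map_sum,
    monomial_mul, homogenizeTo_monomial]
  refine Finset.sum_congr rfl fun a ha => Finset.sum_congr rfl fun b hb => ?_
  rw [homogenizeExp_add ((le_totalDegree ha).trans hf) ((le_totalDegree hb).trans hg)]

lemma homogenizeTo_add_left {d k : ℕ} {f : MvPolynomial (Fin n) R} (h : f.totalDegree ≤ d) :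
    homogenizeTo (k + d) f = X 0 ^ k * homogenizeTo d f := by
  rw [homogenizeTo_apply, homogenizeTo_apply, Finset.mul_sum]
  refine Finset.sum_congr rfl fun a ha => ?_
  rw [X_pow_eq_monomial, monomial_mul, one_mul,
    homogenizeExp_add_left ((le_totalDegree ha).trans h)]

end Homogenization

section Dehomogenization

variable {K : Type*} [Field K] {n : ℕ}

lemma dehomAlg_X_zero : dehomAlg (K := K) n (X 0) = 1 := by
  rw [dehomAlg, aeval_X, Fin.cases_zero]

lemma dehomAlg_monomial_cons (y : ℕ) (a : Fin n →₀ ℕ) (c : K) :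
    dehomAlg n (monomial (Finsupp.cons y a) c) = monomial a c := by
  rw [dehomAlg, aeval_monomial, monomial_eq, Finsupp.prod_fintype _ _ (by simp),
    Finsupp.prod_fintype _ _ (by simp), Fin.prod_univ_succ]
  simp

lemma dehomAlg_homogenizeTo (d : ℕ) (f : MvPolynomial (Fin n) K) :
    dehomAlg n (homogenizeTo d f) = f := by
  conv_rhs => rw [← support_sum_monomial_coeff f]
  simp only [homogenizeTo_apply, map_sum, homogenizeExp, dehomAlg_monomial_cons]

lemma dehomAlg_homogPoly (f : MvPolynomial (Fin n) K) : dehomAlg n (homogPoly f) = f := by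
  rw [homogPoly_eq_homogenizeTo, dehomAlg_homogenizeTo]

lemma homogenizeExp_tail {l : ℕ} {b : Fin (n + 1) →₀ ℕ} (h : b.degree = l) :
    homogenizeExp l b.tail = b := by
  conv_rhs => rw [← Finsupp.cons_tail b]
  rw [← Finsupp.cons_tail b, Finsupp.degree_cons] at h
  rw [homogenizeExp]
  congr 1
  omega

lemma dehomAlg_monomial (b : Fin (n + 1) →₀ ℕ) (c : K) :
    dehomAlg n (monomial b c) = monomial b.tail c := by
  conv_lhs => rw [← Finsupp.cons_tail b]
  exact dehomAlg_monomial_cons _ _ _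

lemma homogenizeTo_dehomAlg {l : ℕ} {f : MvPolynomial (Fin (n + 1)) K} (hf : f.IsHomogeneous l) :
    homogenizeTo l (dehomAlg n f) = f := by
  conv_lhs => rw [← support_sum_monomial_coeff f]
  conv_rhs => rw [← support_sum_monomial_coeff f]
  simp only [map_sum, dehomAlg_monomial, homogenizeTo_monomial]
  refine Finset.sum_congr rfl fun b hb => ?_
  rw [homogenizeExp_tail (hf.degree_eq_sum_deg_support hb).symm]

lemma totalDegree_dehomAlg_le {l : ℕ} {f : MvPolynomial (Fin (n + 1)) K}
    (hf : f.IsHomogeneous l) : (dehomAlg n f).totalDegree ≤ l := by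
  conv_lhs => rw [← support_sum_monomial_coeff f]
  rw [map_sum]
  refine (totalDegree_finsetSum _ _).trans (Finset.sup_le fun b hb => ?_)
  rw [dehomAlg_monomial]
  refine (totalDegree_monomial_le _ _).trans ?_
  have := (hf.degree_eq_sum_deg_support hb).symm
  rw [← Finsupp.cons_tail b, ← Finsupp.degree_apply, Finsupp.degree_cons] at this
  exact (Nat.le_add_left _ _).trans this.le

end Dehomogenization

end MvPolynomial

section Saturation

open MvPolynomial

attribute [local instance] MvPolynomial.gradedAlgebra

variable {σ K : Type*} [Field K] {I : Ideal (MvPolynomial σ K)}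

local notation "𝔪" => Ideal.span (Set.range (X : σ → MvPolynomial σ K))

lemma monotone_colon_span_X_pow (I : Ideal (MvPolynomial σ K)) :
    Monotone fun k : ℕ => I.colon (𝔪 ^ k : Ideal _) :=
  fun _ _ hkl => Submodule.colon_mono le_rfl (Ideal.pow_le_pow_right hkl)

lemma mem_maxSat_iff {f : MvPolynomial σ K} :
    f ∈ maxSat I ↔ ∃ k, f ∈ I.colon (𝔪 ^ k : Ideal _) :=
  Submodule.mem_iSup_of_directed _ (monotone_colon_span_X_pow I).directed_le

lemma le_maxSat (I : Ideal (MvPolynomial σ K)) : I ≤ maxSat I :=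
  fun _ hf => mem_maxSat_iff.mpr ⟨0, Ideal.le_colon hf⟩

lemma exists_maxSat_eq_colon [Finite σ] (I : Ideal (MvPolynomial σ K)) :
    ∃ k, maxSat I = I.colon (𝔪 ^ k : Ideal _) := by
  obtain ⟨k, hk⟩ := monotone_stabilizes_iff_noetherian.mpr inferInstance
    ⟨_, monotone_colon_span_X_pow I⟩
  refine ⟨k, le_antisymm (iSup_le fun j => ?_) (le_iSup (fun j => I.colon (𝔪 ^ j : Ideal _)) k)⟩
  rcases le_total j k with hjk | hkj
  · exact monotone_colon_span_X_pow I hjk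
  · exact (hk j hkj).ge

/-- Write `I^sat = I : 𝔪^k` and let `D` bound the degrees of finitely many generators of `I^sat`.
A homogeneous element of `I^sat` of degree `≥ k + D` is a combination of homogeneous components
of the generators (which lie in `I : 𝔪^k`, as it is homogeneous) with coefficients in `𝔪^k`. -/
lemma exists_forall_isHomogeneous_mem_of_mem_maxSat [Finite σ]
    (hI : I.IsHomogeneous (homogeneousSubmodule σ K)) :
    ∃ s, ∀ l, s ≤ l → ∀ f : MvPolynomial σ K, f.IsHomogeneous l → f ∈ maxSat I → f ∈ I := by
  classical
  obtain ⟨k, hk⟩ := exists_maxSat_eq_colon I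
  obtain ⟨S, hS⟩ := (IsNoetherian.noetherian (maxSat I) : (maxSat I).FG)
  refine ⟨k + S.sup totalDegree, fun l hl f hf hfI => ?_⟩
  obtain ⟨p, -, rfl⟩ := Submodule.mem_span_finset.mp (hS ▸ hfI)
  rw [← homogeneousComponent_eq_self hf, map_sum]
  refine I.sum_mem fun s hs => ?_
  have hsJ : s ∈ I.colon (𝔪 ^ k : Ideal _) := hk ▸ hS ▸ Submodule.subset_span hs
  rw [smul_eq_mul, ← congrArg (p s * ·) (sum_homogeneousComponent s), Finset.mul_sum, map_sum]
  refine I.sum_mem fun m hm => ?_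
  rw [homogeneousComponent_mul_of_isHomogeneous (homogeneousComponent_isHomogeneous m s)]
  split_ifs with hml
  · have hm' : m ≤ S.sup totalDegree :=
      (Nat.lt_succ_iff.mp (Finset.mem_range.mp hm)).trans (Finset.le_sup hs)
    have hp : homogeneousComponent (l - m) (p s) ∈ 𝔪 ^ k :=
      mem_span_X_pow_of_isHomogeneous (homogeneousComponent_isHomogeneous _ _) (by omega)
    rw [mul_comm, ← smul_eq_mul]
    exact Submodule.mem_colon.mp
      (homogeneousComponent_mem_of_mem (isHomogeneous_colon_span_X_pow hI k) hsJ m) _ hp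
  · exact I.zero_mem

lemma mem_iff_mem_maxSat_of_satiety_le [Finite σ]
    (hI : I.IsHomogeneous (homogeneousSubmodule σ K)) {l : ℕ} (hl : satiety I ≤ l)
    {f : MvPolynomial σ K} (hf : f.IsHomogeneous l) : f ∈ I ↔ f ∈ maxSat I := by
  obtain ⟨s, hs⟩ := exists_forall_isHomogeneous_mem_of_mem_maxSat hI
  exact Nat.sInf_mem (s := {s : ℕ | ∀ l, s ≤ l → ∀ f : MvPolynomial σ K, f.IsHomogeneous l →
      (f ∈ I ↔ f ∈ maxSat I)}) ⟨s, fun l hl f hf => ⟨fun h => le_maxSat I h, hs l hl f hf⟩⟩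
    l hl f hf

end Saturation

lemma mem_of_pow_mul_mem {R : Type*} [CommSemiring R] {J : Ideal R} {a : R}
    (ha : ∀ f, a * f ∈ J → f ∈ J) (k : ℕ) {f : R} (hf : a ^ k * f ∈ J) : f ∈ J := by
  induction k generalizing f with
  | zero => rwa [pow_zero, one_mul] at hf
  | succ k ih => exact ha f (ih (by rwa [← mul_assoc, ← pow_succ]))

section MacaulaySpace

variable {σ R ι : Type*} [CommSemiring R] [Fintype ι] {F : ι → MvPolynomial σ R}

lemma mem_span_of_mem_Wsp {d : ℕ} {f : MvPolynomial σ R} (hf : f ∈ Wsp F d) :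
    f ∈ Ideal.span (Set.range F) := by
  obtain ⟨g, rfl, -⟩ := hf
  exact Ideal.sum_mem _ fun i _ => Ideal.mul_mem_left _ _ (Ideal.subset_span ⟨i, rfl⟩)

lemma totalDegree_le_of_mem_Wsp {d : ℕ} {f : MvPolynomial σ R} (hf : f ∈ Wsp F d) :
    f.totalDegree ≤ d := by
  obtain ⟨g, rfl, hg⟩ := hf
  exact (totalDegree_finsetSum _ _).trans (Finset.sup_le fun i _ => hg i)

lemma Wsp_mono {d e : ℕ} (hde : d ≤ e) : Wsp F d ⊆ Wsp F e :=
  fun _ ⟨g, hf, hg⟩ => ⟨g, hf, fun i => (hg i).trans hde⟩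

lemma exists_mem_Wsp {f : MvPolynomial σ R} (hf : f ∈ Ideal.span (Set.range F)) :
    ∃ d, f ∈ Wsp F d := by
  obtain ⟨g, rfl⟩ := Ideal.mem_span_range_iff_exists_fun.mp hf
  exact ⟨Finset.univ.sup fun i => (g i * F i).totalDegree, g, rfl,
    fun i => Finset.le_sup (f := fun i => (g i * F i).totalDegree) (Finset.mem_univ i)⟩

end MacaulaySpace

section HomogenizedSystem

variable {K ι : Type*} [Field K] {n : ℕ} {F : ι → MvPolynomial (Fin n) K}

local notation "𝓘ʰ" => Ideal.span (homogPoly '' Set.range F)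

attribute [local instance] MvPolynomial.gradedAlgebra

lemma isHomogeneous_span_homogPoly :
    (𝓘ʰ).IsHomogeneous (homogeneousSubmodule (Fin (n + 1)) K) :=
  Ideal.homogeneous_span _ _ <| by
    rintro _ ⟨f, -, rfl⟩
    exact ⟨_, isHomogeneous_homogPoly f⟩

lemma homogPoly_mem_span (i : ι) : homogPoly (F i) ∈ 𝓘ʰ :=
  Ideal.subset_span ⟨F i, ⟨i, rfl⟩, rfl⟩

lemma dehomAlg_mem_span_of_mem_maxSat {P : MvPolynomial (Fin (n + 1)) K} (hP : P ∈ maxSat 𝓘ʰ) :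
    dehomAlg n P ∈ Ideal.span (Set.range F) := by
  obtain ⟨k, hk⟩ := mem_maxSat_iff.mp hP
  have hXk : X 0 ^ k ∈ Ideal.span (Set.range (X : Fin (n + 1) → MvPolynomial (Fin (n + 1)) K)) ^ k
    := Ideal.pow_mem_pow (Ideal.subset_span (Set.mem_range_self 0)) k
  have hmap : 𝓘ʰ ≤ (Ideal.span (Set.range F)).comap (dehomAlg n) := by
    refine Ideal.span_le.mpr ?_
    rintro _ ⟨_, ⟨i, rfl⟩, rfl⟩
    rw [SetLike.mem_coe, Ideal.mem_comap, dehomAlg_homogPoly]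
    exact Ideal.subset_span ⟨i, rfl⟩
  simpa only [smul_eq_mul, Ideal.mem_comap, map_mul, map_pow, dehomAlg_X_zero, one_pow,
    mul_one] using hmap (Submodule.mem_colon.mp hk _ hXk)

variable [Fintype ι]

lemma homogenizeTo_mem_of_mem_Wsp {d : ℕ} {f : MvPolynomial (Fin n) K} (hf : f ∈ Wsp F d) :
    homogenizeTo d f ∈ 𝓘ʰ := by
  obtain ⟨g, rfl, hg⟩ := hf
  rw [map_sum]
  refine Ideal.sum_mem _ fun i _ => ?_
  by_cases h0 : g i * F i = 0
  · rw [h0, map_zero]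
    exact Ideal.zero_mem _
  have hdeg := hg i
  rw [totalDegree_mul_of_isDomain (left_ne_zero_of_mul h0) (right_ne_zero_of_mul h0)] at hdeg
  rw [← Nat.sub_add_cancel (le_of_add_le_right hdeg), homogenizeTo_mul (by omega) le_rfl,
    ← homogPoly_eq_homogenizeTo]
  exact Ideal.mul_mem_left _ _ (homogPoly_mem_span i)

lemma dehomAlg_mem_Wsp {d : ℕ} {P : MvPolynomial (Fin (n + 1)) K} (hP : P.IsHomogeneous d)
    (hPI : P ∈ 𝓘ʰ) : dehomAlg n P ∈ Wsp F d := by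
  rw [← Set.range_comp] at hPI
  obtain ⟨p, rfl⟩ := Ideal.mem_span_range_iff_exists_fun.mp hPI
  refine ⟨fun i => if (F i).totalDegree ≤ d then
      dehomAlg n (homogeneousComponent (d - (F i).totalDegree) (p i)) else 0, ?_, fun i => ?_⟩
  · rw [← homogeneousComponent_eq_self hP, map_sum, map_sum]
    refine Finset.sum_congr rfl fun i _ => ?_
    rw [Function.comp_apply, homogeneousComponent_mul_of_isHomogeneous (isHomogeneous_homogPoly _)]
    dsimp only
    split_ifs
    · rw [map_mul, dehomAlg_homogPoly]
    · rw [map_zero, zero_mul]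
  · dsimp only
    split_ifs with hle
    · refine (totalDegree_mul _ _).trans ?_
      have := totalDegree_dehomAlg_le (homogeneousComponent_isHomogeneous
        (d - (F i).totalDegree) (p i))
      omega
    · simp

lemma homogenizeTo_mem_maxSat (hX : ∀ f, X 0 * f ∈ maxSat 𝓘ʰ → f ∈ maxSat 𝓘ʰ)
    {d : ℕ} {f : MvPolynomial (Fin n) K} (hf : f ∈ Ideal.span (Set.range F))
    (hd : f.totalDegree ≤ d) : homogenizeTo d f ∈ maxSat 𝓘ʰ := by
  obtain ⟨k, hk⟩ := exists_mem_Wsp hf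
  have := homogenizeTo_mem_of_mem_Wsp (Wsp_mono (Nat.le_add_right k d) hk)
  rw [homogenizeTo_add_left hd] at this
  exact mem_of_pow_mul_mem hX k (le_maxSat _ this)

lemma mem_Wsp_iff_of_satiety_le (hX : ∀ f, X 0 * f ∈ maxSat 𝓘ʰ → f ∈ maxSat 𝓘ʰ) {d : ℕ}
    (hd : satiety 𝓘ʰ ≤ d) {f : MvPolynomial (Fin n) K} :
    f ∈ Wsp F d ↔ f ∈ Ideal.span (Set.range F) ∧ f.totalDegree ≤ d := by
  refine ⟨fun hf => ⟨mem_span_of_mem_Wsp hf, totalDegree_le_of_mem_Wsp hf⟩, fun ⟨hf, hdeg⟩ => ?_⟩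
  have hhom := isHomogeneous_homogenizeTo hdeg
  have hmem := (mem_iff_mem_maxSat_of_satiety_le isHomogeneous_span_homogPoly hd hhom).mpr
    (homogenizeTo_mem_maxSat hX hf hdeg)
  simpa only [dehomAlg_homogenizeTo] using dehomAlg_mem_Wsp hhom hmem

lemma satiety_le_of_forall_mem_Wsp {e : ℕ}
    (he : ∀ f ∈ Ideal.span (Set.range F), f ∈ Wsp F (max e f.totalDegree)) :
    satiety 𝓘ʰ ≤ e := by
  refine Nat.sInf_le fun l hl P hP => ⟨fun h => le_maxSat _ h, fun h => ?_⟩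
  set g := dehomAlg n P
  have hd : max e g.totalDegree ≤ l := max_le hl (totalDegree_dehomAlg_le hP)
  have hg := homogenizeTo_mem_of_mem_Wsp (he g (dehomAlg_mem_span_of_mem_maxSat h))
  rw [← homogenizeTo_dehomAlg hP, ← Nat.sub_add_cancel hd, homogenizeTo_add_left (le_max_right _ _)]
  exact Ideal.mul_mem_left _ _ hg

lemma lastFall_eq_satiety (hX : ∀ f, X 0 * f ∈ maxSat 𝓘ʰ → f ∈ maxSat 𝓘ʰ) :
    lastFall F = satiety 𝓘ʰ := by
  refine le_antisymm (sInf_le fun e he f hf => ?_) (le_sInf fun b hb => ?_)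
  · rw [← Nat.cast_inj.mp he]
    exact (mem_Wsp_iff_of_satiety_le hX (le_max_left _ _)).mpr ⟨hf, le_max_right _ _⟩
  · induction b using ENat.recTopCoe with
    | top => exact le_top
    | coe e => exact_mod_cast satiety_le_of_forall_mem_Wsp (hb e rfl)

lemma dfall_le_satiety (hX : ∀ f, X 0 * f ∈ maxSat 𝓘ʰ → f ∈ maxSat 𝓘ʰ)
    {f : MvPolynomial (Fin n) K} (hf : f ∈ Ideal.span (Set.range F))
    (hfall : f.totalDegree < dfall F f) : dfall F f ≤ satiety 𝓘ʰ := by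
  have : dfall F f ≤ max (satiety 𝓘ʰ) f.totalDegree := Nat.sInf_le <|
    (mem_Wsp_iff_of_satiety_le hX (le_max_left _ _)).mpr ⟨hf, le_max_right _ _⟩
  exact (le_max_iff.mp this).resolve_right hfall.not_ge

end HomogenizedSystem

theorem stmt_16_general {K : Type*} [Field K] {nv mI : ℕ}
    (F : Fin mI → MvPolynomial (Fin nv) K)
    (hgen : GenCoords (0 : Fin (nv + 1)) (Ideal.span (homogPoly '' Set.range F)))
    (hne : (projZerosBar (Ideal.span (homogPoly '' Set.range F))).Nonempty) :
    (∀ d : ℕ, satiety (Ideal.span (homogPoly '' Set.range F)) ≤ d →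
      {f | f ∈ Ideal.span (Set.range F) ∧ f.totalDegree ≤ d} = Wsp F d)
    ∧ lastFall F = ((satiety (Ideal.span (homogPoly '' Set.range F)) : ℕ) : ℕ∞)
    ∧ ∀ f ∈ Ideal.span (Set.range F), f.totalDegree < dfall F f →
        dfall F f ≤ satiety (Ideal.span (homogPoly '' Set.range F)) := by
  have hX := hgen.2.resolve_left hne.ne_empty
  exact ⟨fun d hd => Set.ext fun f => (mem_Wsp_iff_of_satiety_le hX hd).symm,
    lastFall_eq_satiety hX, fun f hf hfall => dfall_le_satiety hX hf hfall⟩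

/-- If `(F^h)` is in generic coordinates with nonempty projective zero locus,
then for every `d ≥ sat((F^h))` one has `(F)_{≤ d} = W_{F,d}`; consequently the last fall
degree equals the satiety and every degree fall is at most the satiety. -/
theorem stmt_16 {K : Type*} [Field K] [IsAlgClosed K] {nv mI : ℕ}
    (F : Fin mI → MvPolynomial (Fin nv) K)
    (hgen : GenCoords (0 : Fin (nv + 1)) (Ideal.span (homogPoly '' Set.range F)))
    (hne : (projZerosBar (Ideal.span (homogPoly '' Set.range F))).Nonempty) :
    (∀ d : ℕ, satiety (Ideal.span (homogPoly '' Set.range F)) ≤ d →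
      {f | f ∈ Ideal.span (Set.range F) ∧ f.totalDegree ≤ d} = Wsp F d)
    ∧ lastFall F = ((satiety (Ideal.span (homogPoly '' Set.range F)) : ℕ) : ℕ∞)
    ∧ ∀ f ∈ Ideal.span (Set.range F), f.totalDegree < dfall F f →
        dfall F f ≤ satiety (Ideal.span (homogPoly '' Set.range F)) :=
  stmt_16_general F hgen hne
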